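/- The map sending σ ∈ S_n to the transpose of the (n−1)×(n−1) matrix obtained by deleting the first row and first column of T P(σ) Tᵗ is a group homomorphism from S_n into the orthogonal group of (n−1)×(n−1) real orthogonal matrices. -/

import Mathlib

/-!
The rows of `Umat n` are pairwise orthogonal and `Amat n` normalises them, so `T = Tmat n` is
orthogonal, with constant first row `1/√n`. Every permutation matrix fixes the constant vector, so
the first row of `T P(σ) Tᵀ` is that of the identity; hence deleting the first row and column is
compatible with products of such matrices, and the reduced matrices are again orthogonal. Since
`P(στ) = P(τ) P(σ)`, transposing the reduced matrices makes `σ ↦ D σ` a homomorphism.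
-/

open Matrix

/-- The n×n matrix `U` from the paper: first row all ones; row `m` (1-based, m≥2)
has entries −1 in columns 1,…,n−m+1, entry n−m+1 in column n−m+2, and 0 afterwards.
Indices are 0-based here, so row `i` corresponds to `m = i+1`. -/
noncomputable def Umat (n : ℕ) : Matrix (Fin n) (Fin n) ℝ :=
  Matrix.of fun i j =>
    if i.val = 0 then 1
    else if j.val < n - i.val then -1
    else if j.val = n - i.val then ((n : ℝ) - i.val)
    else 0

/-- The diagonal matrix `A` with `A₁₁ = 1/√n` and `A_kk = 1/√((n−k+1)(n−k+2))` for k ≥ 2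
(1-based `k = i+1`). -/
noncomputable def Amat (n : ℕ) : Matrix (Fin n) (Fin n) ℝ :=
  Matrix.diagonal fun i =>
    if i.val = 0 then 1 / Real.sqrt n
    else 1 / Real.sqrt (((n : ℝ) - i.val) * ((n : ℝ) - i.val + 1))

/-- The orthogonal transform `T = A U`. -/
noncomputable def Tmat (n : ℕ) : Matrix (Fin n) (Fin n) ℝ := Amat n * Umat n

/-- The permutation matrix `P(σ)` with `P(σ)_{i,j} = 1` iff `j = σ(i)`. -/
def Pmat (n : ℕ) (σ : Equiv.Perm (Fin n)) : Matrix (Fin n) (Fin n) ℝ :=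
  Matrix.of fun i j => if j = σ i then 1 else 0

open Equiv

namespace Matrix

section Conj

variable {n R : Type*} [Fintype n] [DecidableEq n] [CommRing R] (T : Matrix n n R)

theorem conj_permMatrix_mul (hT : Tᵀ * T = 1) (σ τ : Perm n) :
    T * (σ * τ).permMatrix R * Tᵀ =
      (T * τ.permMatrix R * Tᵀ) * (T * σ.permMatrix R * Tᵀ) := by
  simp only [permMatrix_mul, Matrix.mul_assoc, ← Matrix.mul_assoc Tᵀ T, hT, Matrix.one_mul]

theorem conj_permMatrix_transpose (σ : Perm n) :
    (T * σ.permMatrix R * Tᵀ)ᵀ = T * σ⁻¹.permMatrix R * Tᵀ := by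
  rw [transpose_mul, transpose_mul, transpose_transpose, transpose_permMatrix, Matrix.mul_assoc]

theorem conj_permMatrix_row_eq_one_row (hT : T * Tᵀ = 1) {σ : Perm n} {i : n}
    (hσ : T i ∘ σ = T i) : (T * σ.permMatrix R * Tᵀ) i = (1 : Matrix n n R) i := by
  have hrow : T i ∘ σ.symm = T i := by
    funext l
    simpa using (congrFun hσ (σ.symm l)).symm
  rw [mul_apply_eq_vecMul, mul_apply_eq_vecMul, vecMul_permMatrix, hrow, ← mul_apply_eq_vecMul,
    hT]

end Conj

theorem submatrix_succ_mul {R : Type*} [NonUnitalNonAssocSemiring R] {m : ℕ}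
    (M N : Matrix (Fin (m + 1)) (Fin (m + 1)) R) (hN : ∀ j : Fin m, N 0 j.succ = 0) :
    (M * N).submatrix Fin.succ Fin.succ =
      M.submatrix Fin.succ Fin.succ * N.submatrix Fin.succ Fin.succ := by
  ext i j
  simp [mul_apply, Fin.sum_univ_succ, hN]

section StandardRep

variable {R : Type*} [CommRing R] {m : ℕ} (T : Matrix (Fin (m + 1)) (Fin (m + 1)) R)

theorem submatrix_succ_conj_permMatrix_mul (hT : T * Tᵀ = 1) (hT₀ : ∀ k, T 0 k = T 0 0)
    (σ τ : Perm (Fin (m + 1))) :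
    (T * (σ * τ).permMatrix R * Tᵀ).submatrix Fin.succ Fin.succ =
      (T * τ.permMatrix R * Tᵀ).submatrix Fin.succ Fin.succ *
        (T * σ.permMatrix R * Tᵀ).submatrix Fin.succ Fin.succ := by
  rw [conj_permMatrix_mul T (mul_eq_one_comm.mp hT)]
  refine submatrix_succ_mul _ _ fun j => ?_
  have hσ : T 0 ∘ σ = T 0 := funext fun k => (hT₀ (σ k)).trans (hT₀ k).symm
  rw [congrFun (conj_permMatrix_row_eq_one_row T hT hσ) j.succ]
  exact one_apply_ne (Fin.succ_ne_zero j).symm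

theorem submatrix_succ_conj_permMatrix_one (hT : T * Tᵀ = 1) :
    (T * (1 : Perm (Fin (m + 1))).permMatrix R * Tᵀ).submatrix Fin.succ Fin.succ = 1 := by
  rw [permMatrix_one, Matrix.mul_one, hT, submatrix_one _ (Fin.succ_injective m)]

/-- The standard representation of `S_{m+1}` on sum-zero vectors, in the orthonormal basis formed
by rows `1, …, m` of `T`. -/
def standardRep (hT : T * Tᵀ = 1) (hT₀ : ∀ k, T 0 k = T 0 0) :
    Perm (Fin (m + 1)) →* orthogonalGroup (Fin m) R where
  toFun σ := ⟨((T * σ.permMatrix R * Tᵀ).submatrix Fin.succ Fin.succ)ᵀ, by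
    rw [mem_orthogonalGroup_iff, transpose_transpose, transpose_submatrix,
      conj_permMatrix_transpose, ← submatrix_succ_conj_permMatrix_mul T hT hT₀, mul_inv_cancel,
      submatrix_succ_conj_permMatrix_one T hT]⟩
  map_one' := Subtype.ext <| by
    simp only [submatrix_succ_conj_permMatrix_one T hT, transpose_one, OneMemClass.coe_one]
  map_mul' σ τ := Subtype.ext <| by
    simp only [submatrix_succ_conj_permMatrix_mul T hT hT₀, transpose_mul, Submonoid.coe_mul]

end StandardRep

theorem diagonal_one_div_sqrt_mul_diagonal_mul {ι : Type*} [Fintype ι] [DecidableEq ι]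
    {d : ι → ℝ} (hd : ∀ i, 0 < d i) :
    diagonal (fun i => 1 / √(d i)) * diagonal d * diagonal (fun i => 1 / √(d i)) = 1 := by
  rw [diagonal_mul_diagonal, diagonal_mul_diagonal, ← diagonal_one]
  congr 1
  funext i
  have := (Real.sqrt_pos.2 (hd i)).ne'
  field_simp
  rw [Real.sq_sqrt (hd i).le]

end Matrix

/-- The entries of `Umat n` (a Helmert matrix with its rows reversed) on natural-number indices,
so that inner products of rows are sums over `Finset.range n`. -/
noncomputable def helmertRow (n a k : ℕ) : ℝ :=
  if a = 0 then 1 else if k < n - a then -1 else if k = n - a then (n : ℝ) - a else 0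

noncomputable def helmertNormSq (n a : ℕ) : ℝ :=
  if a = 0 then n else ((n : ℝ) - a) * ((n : ℝ) - a + 1)

theorem helmertRow_of_lt_sub {n a k : ℕ} (hk : k < n - a) :
    helmertRow n a k = helmertRow n a 0 := by
  unfold helmertRow
  split_ifs <;> first | rfl | omega

theorem helmertRow_eq_zero_of_sub_lt {n a k : ℕ} (ha : a ≠ 0) (hk : n - a < k) :
    helmertRow n a k = 0 := by
  simp only [helmertRow, ha, if_false]
  split_ifs <;> first | rfl | omega

theorem sum_helmertRow_mul_of_le {n a b : ℕ} (hab : a ≤ b) (hb : b < n) :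
    ∑ k ∈ Finset.range n, helmertRow n a k * helmertRow n b k =
      if a = b then helmertNormSq n a else 0 := by
  rcases eq_or_ne b 0 with rfl | hb0
  · obtain rfl : a = 0 := by omega
    simp [helmertRow, helmertNormSq]
  have hsupp : ∑ k ∈ Finset.range (n - b + 1), helmertRow n a k * helmertRow n b k =
      ∑ k ∈ Finset.range n, helmertRow n a k * helmertRow n b k :=
    Finset.sum_subset (Finset.range_subset_range.2 (by omega)) fun k _ hk => by
      rw [helmertRow_eq_zero_of_sub_lt hb0 (by simp at hk; omega), mul_zero]
  have hconst : ∀ k ∈ Finset.range (n - b), helmertRow n a k * helmertRow n b k =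
      helmertRow n a 0 * helmertRow n b 0 := fun k hk => by
    rw [Finset.mem_range] at hk
    rw [helmertRow_of_lt_sub (a := a) (by omega), helmertRow_of_lt_sub hk]
  rw [← hsupp, Finset.sum_range_succ, Finset.sum_congr rfl hconst]
  have hcast : ((n - b : ℕ) : ℝ) = n - b := by push_cast [Nat.cast_sub hb.le]; ring
  rcases eq_or_ne a 0 with rfl | ha0
  · simp [helmertRow, hb0, hcast, Ne.symm hb0, show 0 < n - b by omega]
  rcases eq_or_lt_of_le hab with rfl | hlt
  · simp only [helmertRow, helmertNormSq, ha0, hcast, show 0 < n - a by omega, ↓reduceIte,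
      lt_self_iff_false, Finset.sum_const, Finset.card_range, nsmul_eq_mul]
    ring
  · rw [helmertRow_of_lt_sub (show n - b < n - a by omega)]
    simp [helmertRow, ha0, hb0, hcast, hlt.ne, show 0 < n - b by omega, show 0 < n - a by omega]

theorem helmertNormSq_pos {n a : ℕ} (ha : a < n) : 0 < helmertNormSq n a := by
  have : (a : ℝ) < n := by exact_mod_cast ha
  unfold helmertNormSq
  split_ifs <;> nlinarith

theorem Umat_mul_transpose (n : ℕ) :
    Umat n * (Umat n)ᵀ = diagonal fun i : Fin n => helmertNormSq n i := by
  ext i j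
  change ∑ k : Fin n, helmertRow n i k * helmertRow n j k = _
  rw [Fin.sum_univ_eq_sum_range (fun k => helmertRow n i k * helmertRow n j k), diagonal_apply]
  rcases le_total (i : ℕ) j with hij | hji
  · rw [sum_helmertRow_mul_of_le hij j.isLt]
    simp only [Fin.val_inj]
  · simp_rw [mul_comm (helmertRow n i _)]
    rw [sum_helmertRow_mul_of_le hji i.isLt]
    rcases eq_or_ne i j with rfl | h
    · simp
    · simp [h, h.symm, Fin.val_inj]

theorem Amat_eq_diagonal (n : ℕ) :
    Amat n = diagonal fun i : Fin n => 1 / √(helmertNormSq n i) := by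
  simp only [Amat, helmertNormSq, apply_ite]

theorem Tmat_mul_transpose (n : ℕ) : Tmat n * (Tmat n)ᵀ = 1 := by
  rw [Tmat, transpose_mul, Amat_eq_diagonal, diagonal_transpose, Matrix.mul_assoc,
    ← Matrix.mul_assoc (Umat n), Umat_mul_transpose, ← Matrix.mul_assoc]
  exact diagonal_one_div_sqrt_mul_diagonal_mul fun i => helmertNormSq_pos i.isLt

theorem Tmat_zero_apply (m : ℕ) (k : Fin (m + 1)) : Tmat (m + 1) 0 k = Tmat (m + 1) 0 0 := by
  simp [Tmat, Amat, Umat, diagonal_mul]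

theorem Pmat_eq_permMatrix (n : ℕ) (σ : Perm (Fin n)) : Pmat n σ = σ.permMatrix ℝ := by
  ext i j
  simp [Pmat, PEquiv.toMatrix_apply, eq_comm]

/-- The map sending σ to the transpose of the (n−1)×(n−1) matrix obtained
from T P(σ) Tᵗ by deleting the first row and column is a group homomorphism of Sₙ into
the orthogonal group of (n−1)×(n−1) real orthogonal matrices. -/
theorem stmt_1 (n : ℕ) (hn : 2 ≤ n) :
    let D : Equiv.Perm (Fin n) → Matrix (Fin (n - 1)) (Fin (n - 1)) ℝ := fun σ =>
      ((Tmat n * Pmat n σ * (Tmat n)ᵀ).submatrix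
        (fun i : Fin (n - 1) => (⟨i.val + 1, by have := i.isLt; omega⟩ : Fin n))
        (fun j : Fin (n - 1) => (⟨j.val + 1, by have := j.isLt; omega⟩ : Fin n)))ᵀ
    (∀ σ, D σ ∈ Matrix.orthogonalGroup (Fin (n - 1)) ℝ) ∧
    D 1 = 1 ∧
    (∀ σ δ, D (σ * δ) = D σ * D δ) := by
  obtain ⟨m, rfl⟩ : ∃ m, n = m + 1 := ⟨n - 1, by omega⟩
  intro D
  let ρ := standardRep (Tmat (m + 1)) (Tmat_mul_transpose _) (Tmat_zero_apply m)
  have hD : ∀ σ, D σ = (ρ σ).1 := fun σ => by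
    simp only [D, Pmat_eq_permMatrix]
    rfl
  refine ⟨fun σ => hD σ ▸ (ρ σ).2, ?_, fun σ δ => ?_⟩
  · rw [hD, map_one]
    rfl
  · rw [hD, hD, hD, map_mul]
    rfl
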